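/- arXiv:1101.2182 — 4 statements merged into one kernel-verified Lean document; each statement's English description precedes it below -/
import Mathlib

section
/- Let ψ : ℕ → ℝ≥0 be such that the series Σ_{q=1}^∞ (√q · ψ(q))^K converges. Then for almost every h ∈ ℝ^K there exists a constant c > 0 such that for all q ∈ ℕ, max over k ∈ {1,...,K} of the distance from h_k to the set {a/√q : a ∈ ℤ} is at least c · ψ(q). -/
/-!
Fix `ε > 0`. In each coordinate, the points within `ε ψ(q)` of `ℤ / √q` meet a unit interval
in at most `3 √q` intervals of length `2 ε ψ(q)`, so the points of a unit cube all of whose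
coordinates are that close have measure at most `(6 ε √q ψ(q))^K`. Summing over `q`, the points
of the cube for which no constant `c` works have measure at most `(6 ε)^K ∑ (√q ψ(q))^K` for
every `ε > 0`, hence measure zero.
-/

open MeasureTheory Set Filter Topology
open scoped ENNReal

def nearScaledInt (N δ : ℝ) : Set ℝ := {x | ∃ a : ℤ, |x - a / N| < δ}

lemma card_Icc_ceil_floor_le {x y : ℝ} (h : x ≤ y + 1) :
    ((Finset.Icc ⌈x⌉ ⌊y⌋).card : ℝ) ≤ y - x + 1 := by
  rw [Int.card_Icc]
  rcases le_or_gt (⌊y⌋ + 1 - ⌈x⌉) 0 with hneg | hpos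
  · rw [Int.toNat_of_nonpos hneg, Nat.cast_zero]
    linarith
  · have hcast : (((⌊y⌋ + 1 - ⌈x⌉).toNat : ℤ) : ℝ) = ⌊y⌋ + 1 - ⌈x⌉ := by
      rw [Int.toNat_of_nonneg hpos.le]; push_cast; ring
    rw [← Int.cast_natCast, hcast]
    linarith [Int.floor_le y, Int.le_ceil x]

lemma volume_nearScaledInt_inter_Ico_le {N : ℝ} (hN : 1 ≤ N) (δ t : ℝ) :
    volume (nearScaledInt N δ ∩ Ico t (t + 1)) ≤ ENNReal.ofReal (6 * δ * N) := by
  have hN0 : 0 < N := by linarith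
  rcases le_or_gt δ 0 with hδ | hδ
  · have hempty : nearScaledInt N δ = ∅ :=
      eq_empty_of_forall_notMem fun x ⟨a, ha⟩ => (abs_nonneg _).not_gt (ha.trans_le hδ)
    simp [hempty]
  rcases le_or_gt 1 (2 * δ * N) with hlarge | hsmall
  · calc volume (nearScaledInt N δ ∩ Ico t (t + 1)) ≤ volume (Ico t (t + 1)) :=
          measure_mono inter_subset_right
      _ = ENNReal.ofReal 1 := by rw [Real.volume_Ico, add_sub_cancel_left]
      _ ≤ ENNReal.ofReal (6 * δ * N) := ENNReal.ofReal_le_ofReal (by linarith)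
  -- only the centres `a / N` with `a ∈ [(t - δ) N, (t + 1 + δ) N]` can meet the interval
  set A := Finset.Icc ⌈(t - δ) * N⌉ ⌊(t + 1 + δ) * N⌋
  have hcover :
      nearScaledInt N δ ∩ Ico t (t + 1) ⊆ ⋃ a ∈ A, Ioo (a / N - δ) (a / N + δ) := by
    rintro x ⟨⟨a, ha⟩, hxt, hxt'⟩
    obtain ⟨h1, h2⟩ := abs_lt.1 ha
    have hlo : (t - δ) * N ≤ a := (le_div_iff₀ hN0).1 (by linarith)
    have hhi : (a : ℝ) ≤ (t + 1 + δ) * N := (div_le_iff₀ hN0).1 (by linarith)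
    exact mem_biUnion (Finset.mem_Icc.2 ⟨Int.ceil_le.2 hlo, Int.le_floor.2 hhi⟩)
      ⟨by linarith, by linarith⟩
  have hcard : (A.card : ℝ) ≤ 3 * N := by
    have := card_Icc_ceil_floor_le (x := (t - δ) * N) (y := (t + 1 + δ) * N) (by nlinarith)
    nlinarith
  calc volume (nearScaledInt N δ ∩ Ico t (t + 1))
      ≤ ∑ a ∈ A, volume (Ioo (a / N - δ) (a / N + δ)) :=
        (measure_mono hcover).trans (measure_biUnion_finset_le _ _)
    _ = A.card * ENNReal.ofReal (2 * δ) := by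
        simp only [Real.volume_Ioo, add_sub_sub_cancel, ← two_mul, Finset.sum_const,
          nsmul_eq_mul]
    _ ≤ ENNReal.ofReal (3 * N) * ENNReal.ofReal (2 * δ) := by
        rw [← ENNReal.ofReal_natCast]
        gcongr
    _ = ENNReal.ofReal (6 * δ * N) := by
        rw [← ENNReal.ofReal_mul (by positivity)]
        ring_nf

section
variable {ι : Type*} [Fintype ι]

def unitCube (t : ι → ℝ) : Set (ι → ℝ) := univ.pi fun k => Ico (t k) (t k + 1)

lemma volume_pi_nearScaledInt_inter_unitCube_le {N : ℝ} (hN : 1 ≤ N) (δ : ℝ)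
    (t : ι → ℝ) :
    volume (univ.pi (fun _ => nearScaledInt N δ) ∩ unitCube t) ≤
      ENNReal.ofReal (6 * δ * N) ^ Fintype.card ι := by
  rw [unitCube, ← pi_inter_distrib, volume_pi_pi, ← Finset.card_univ, ← Finset.prod_const]
  exact Finset.prod_le_prod' fun k _ => volume_nearScaledInt_inter_Ico_le hN δ (t k)

lemma volume_iUnion_pi_nearScaledInt_inter_unitCube_le {ψ : ℕ → ℝ} (hψ : ∀ q, 0 ≤ ψ q)
    (hsum : Summable fun q : ℕ => (Real.sqrt q * ψ q) ^ Fintype.card ι) {ε : ℝ}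
    (hε : 0 ≤ ε) (t : ι → ℝ) :
    volume ((⋃ q : ℕ, univ.pi fun _ =>
        nearScaledInt (Real.sqrt (q + 1 : ℕ)) (ε * ψ (q + 1))) ∩ unitCube t) ≤
      ENNReal.ofReal ((6 * ε) ^ Fintype.card ι *
        ∑' q : ℕ, (Real.sqrt q * ψ q) ^ Fintype.card ι) := by
  have hterm :
      ∀ q : ℕ, 0 ≤ (6 * ε) ^ Fintype.card ι * (Real.sqrt q * ψ q) ^ Fintype.card ι :=
    fun q => by have := hψ q; positivity
  calc _ ≤ ∑' q : ℕ, volume ((univ.pi fun _ =>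
          nearScaledInt (Real.sqrt (q + 1 : ℕ)) (ε * ψ (q + 1))) ∩ unitCube t) := by
        rw [iUnion_inter]
        exact measure_iUnion_le _
    _ ≤ ∑' q : ℕ, ENNReal.ofReal ((6 * ε) ^ Fintype.card ι *
          (Real.sqrt (q + 1 : ℕ) * ψ (q + 1)) ^ Fintype.card ι) := by
        refine ENNReal.tsum_le_tsum fun q => ?_
        have hN : (1 : ℝ) ≤ Real.sqrt (q + 1 : ℕ) := Real.one_le_sqrt.2 (by simp)
        refine (volume_pi_nearScaledInt_inter_unitCube_le hN _ t).trans_eq ?_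
        rw [← ENNReal.ofReal_pow (by have := hψ (q + 1); positivity), ← mul_pow]
        ring_nf
    _ ≤ ∑' q : ℕ, ENNReal.ofReal ((6 * ε) ^ Fintype.card ι *
          (Real.sqrt q * ψ q) ^ Fintype.card ι) :=
        ENNReal.tsum_comp_le_tsum_of_injective (add_left_injective 1) _
    _ = _ := by
        rw [← ENNReal.ofReal_tsum_of_nonneg hterm (hsum.mul_left _), tsum_mul_left]

-- the exceptional set of the theorem, with `q + 1` running over the positive integers
def sqrtApproximable (ψ : ℕ → ℝ) : Set (ι → ℝ) :=
  {h | ∀ ε > 0, ∃ q : ℕ, ∀ k,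
    h k ∈ nearScaledInt (Real.sqrt (q + 1 : ℕ)) (ε * ψ (q + 1))}

lemma volume_sqrtApproximable [Nonempty ι] {ψ : ℕ → ℝ} (hψ : ∀ q, 0 ≤ ψ q)
    (hsum : Summable fun q : ℕ => (Real.sqrt q * ψ q) ^ Fintype.card ι) :
    volume (sqrtApproximable ψ : Set (ι → ℝ)) = 0 := by
  set S := ∑' q : ℕ, (Real.sqrt q * ψ q) ^ Fintype.card ι
  have hcover : (sqrtApproximable ψ : Set (ι → ℝ)) ⊆
      ⋃ m : ι → ℤ, sqrtApproximable ψ ∩ unitCube fun k => (m k : ℝ) := fun h hh =>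
    mem_iUnion.2
      ⟨fun k => ⌊h k⌋, hh, fun k _ => ⟨Int.floor_le _, Int.lt_floor_add_one _⟩⟩
  refine measure_mono_null hcover (measure_iUnion_null fun m => ?_)
  have hbound : ∀ ε > 0, volume (sqrtApproximable ψ ∩ unitCube fun k => (m k : ℝ)) ≤
      ENNReal.ofReal ((6 * ε) ^ Fintype.card ι * S) := fun ε hε =>
    (measure_mono (inter_subset_inter_left _ fun h hh =>
      mem_iUnion.2 ((hh ε hε).imp fun _ hq k _ => hq k))).trans
    (volume_iUnion_pi_nearScaledInt_inter_unitCube_le hψ hsum hε.le _)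
  have hlim : Tendsto (fun ε : ℝ => ENNReal.ofReal ((6 * ε) ^ Fintype.card ι * S)) (𝓝[>] 0)
      (𝓝 0) := by
    have hcont : Continuous fun ε : ℝ => ENNReal.ofReal ((6 * ε) ^ Fintype.card ι * S) :=
      ENNReal.continuous_ofReal.comp (by fun_prop)
    simpa [zero_pow Fintype.card_ne_zero] using (hcont.tendsto 0).mono_left nhdsWithin_le_nhds
  exact nonpos_iff_eq_zero.1 (ge_of_tendsto hlim (eventually_nhdsWithin_of_forall hbound))

end

theorem stmt_3 (K : ℕ) (hK : 1 ≤ K) (ψ : ℕ → ℝ) (hψ : ∀ q, 0 ≤ ψ q)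
    (hsum : Summable fun q : ℕ => (Real.sqrt q * ψ q) ^ K) :
    ∀ᵐ h ∂(volume : Measure (Fin K → ℝ)),
      ∃ c > (0 : ℝ), ∀ q : ℕ, 0 < q →
        ∃ k : Fin K, ∀ a : ℤ, c * ψ q ≤ |h k - (a : ℝ) / Real.sqrt q| := by
  have : Nonempty (Fin K) := Fin.pos_iff_nonempty.1 hK
  rw [← Fintype.card_fin K] at hsum
  refine ae_iff.2 (measure_mono_null ?_ (volume_sqrtApproximable hψ hsum))
  intro h hbad ε hε
  push Not at hbad
  obtain ⟨q, hq, hclose⟩ := hbad ε hε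
  obtain ⟨n, rfl⟩ := Nat.exists_eq_add_one_of_ne_zero hq.ne'
  exact ⟨n, hclose⟩
end

section
/- For almost every matrix H ∈ ℝ^{K×K} (with respect to Lebesgue measure), the monomial map S ↦ ∏_{m,k} H_{m,k}^{S_{m,k}} is injective on the set of exponent matrices S ∈ {0,1,...,L−1}^{K×K}; in particular, the set G_L of such monomial values has cardinality exactly L^{K^2}. -/
/-!
For exponent matrices `S ≠ T` the difference `∏ H^S - ∏ H^T` is a nonzero polynomial in the
entries of `H`, and the zero set of a nonzero real polynomial is Lebesgue-null: by Fubini, for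
almost every choice of all but one variable the leading coefficient in the remaining variable does
not vanish, leaving finitely many roots. There are countably many pairs `(S, T)`.
-/

open MeasureTheory

theorem MeasureTheory.volume_preserving_curry_symm (ι κ α : Type*) [Fintype ι] [Fintype κ]
    [MeasureSpace α] [SigmaFinite (volume : Measure α)] :
    MeasurePreserving (MeasurableEquiv.curry ι κ α).symm volume volume := by
  refine ⟨(MeasurableEquiv.curry ι κ α).symm.measurable, (Measure.pi_eq fun s _ => ?_).symm⟩
  have hbox : (MeasurableEquiv.curry ι κ α).symm ⁻¹' Set.univ.pi s =
      Set.univ.pi fun i => Set.univ.pi fun j => s (i, j) := by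
    ext H
    simp [MeasurableEquiv.coe_curry_symm]
  rw [MeasurableEquiv.map_apply, hbox, volume_pi_pi, Fintype.prod_prod_type]
  simp_rw [volume_pi_pi]

namespace MvPolynomial

theorem ae_eval_ne_zero_fin {n : ℕ} {p : MvPolynomial (Fin n) ℝ} (hp : p ≠ 0) :
    ∀ᵐ x : Fin n → ℝ, eval x p ≠ 0 := by
  induction n with
  | zero =>
    refine Filter.Eventually.of_forall fun x => ?_
    rw [eq_C_of_isEmpty p, eval_C]
    exact fun h => hp (by rw [eq_C_of_isEmpty p, h, C_0])
  | succ n ih =>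
    set P := finSuccEquiv ℝ n p
    have hP : P ≠ 0 := by simpa [P] using hp
    have hfiber : ∀ᵐ y : Fin n → ℝ, ∀ᵐ x : ℝ, eval (Fin.cons x y) p ≠ 0 := by
      filter_upwards [ih (Polynomial.leadingCoeff_ne_zero.mpr hP)] with y hy
      have hPy : P.map (eval y) ≠ 0 := fun h => hy <| by
        simpa using congrArg (Polynomial.coeff · P.natDegree) h
      filter_upwards [(Polynomial.finite_setOfPred_isRoot hPy).countable.ae_notMem volume]
        with x hx
      rwa [eval_eq_eval_mv_eval']
    have hmeas : MeasurableSet {w : ℝ × (Fin n → ℝ) | eval (Fin.cons w.1 w.2) p ≠ 0} :=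
      (isOpen_ne_fun ((continuous_eval p).comp (by fun_prop)) continuous_const).measurableSet
    have hprod := (Measure.ae_prod_iff_ae_ae hmeas).mpr ((Measure.ae_ae_comm hmeas).mpr hfiber)
    simpa using (volume_preserving_piFinSuccAbove (fun _ : Fin (n + 1) => ℝ) 0)
      |>.quasiMeasurePreserving.ae hprod

theorem ae_eval_ne_zero {σ : Type*} [Fintype σ] {p : MvPolynomial σ ℝ} (hp : p ≠ 0) :
    ∀ᵐ x : σ → ℝ, eval x p ≠ 0 := by
  set e := Fintype.equivFin σ
  have hrename : rename e p ≠ 0 := (map_ne_zero_iff _ (rename_injective _ e.injective)).mpr hp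
  filter_upwards [(volume_measurePreserving_piCongrLeft (fun _ : σ => ℝ) e.symm).symm
    |>.quasiMeasurePreserving.ae (ae_eval_ne_zero_fin hrename)] with x hx
  rw [eval_rename] at hx
  convert hx
  ext i
  simp [MeasurableEquiv.piCongrLeft, Equiv.piCongrLeft]

theorem eval_monomial_equivFunOnFinite_symm {σ R : Type*} [Fintype σ] [CommSemiring R]
    (x : σ → R) (a : σ → ℕ) :
    eval x (monomial (Finsupp.equivFunOnFinite.symm a) 1) = ∏ i, x i ^ a i := by
  rw [eval_monomial, one_mul, Finsupp.prod_fintype _ _ fun i => pow_zero _]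
  rfl

end MvPolynomial

open MvPolynomial in
theorem ae_injective_prod_pow (σ : Type*) [Fintype σ] :
    ∀ᵐ x : σ → ℝ, Function.Injective fun a : σ → ℕ => ∏ i, x i ^ a i := by
  have hpair : ∀ a b : σ → ℕ, ∀ᵐ x : σ → ℝ, ∏ i, x i ^ a i = ∏ i, x i ^ b i → a = b := by
    intro a b
    rcases eq_or_ne a b with rfl | hab
    · exact Filter.Eventually.of_forall fun _ _ => rfl
    have hp : monomial (Finsupp.equivFunOnFinite.symm a) (1 : ℝ) -
        monomial (Finsupp.equivFunOnFinite.symm b) 1 ≠ 0 :=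
      sub_ne_zero.mpr <| (monomial_left_injective one_ne_zero).ne <|
        Finsupp.equivFunOnFinite.symm.injective.ne hab
    filter_upwards [ae_eval_ne_zero hp] with x hx
    simp only [map_sub, eval_monomial_equivFunOnFinite_symm, ne_eq, sub_eq_zero] at hx
    exact fun h => absurd h hx
  filter_upwards [ae_all_iff.mpr fun a => ae_all_iff.mpr (hpair a)] with x hx a b
  exact hx a b

theorem ae_injective_prod_prod_pow (ι κ : Type*) [Fintype ι] [Fintype κ] :
    ∀ᵐ H : ι → κ → ℝ, Function.Injective fun S : ι → κ → ℕ => ∏ i, ∏ j, H i j ^ S i j := by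
  filter_upwards [(volume_preserving_curry_symm ι κ ℝ).quasiMeasurePreserving.ae
    (ae_injective_prod_pow (ι × κ))] with H hH S T hST
  refine Function.uncurry_injective (hH ?_)
  simpa [Fintype.prod_prod_type, MeasurableEquiv.coe_curry_symm] using hST

theorem stmt_6_general (K L : ℕ) :
    ∀ᵐ H ∂(volume : Measure (Fin K → Fin K → ℝ)),
      Function.Injective
        (fun S : Fin K → Fin K → Fin L => ∏ m : Fin K, ∏ k : Fin K, H m k ^ (S m k : ℕ)) ∧
      (Set.range
        (fun S : Fin K → Fin K → Fin L =>
          ∏ m : Fin K, ∏ k : Fin K, H m k ^ (S m k : ℕ))).ncard = L ^ (K ^ 2) := by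
  have hval : Function.Injective fun (S : Fin K → Fin K → Fin L) m k => (S m k : ℕ) :=
    fun S T h => funext fun m => funext fun k => Fin.ext (congrFun (congrFun h m) k)
  filter_upwards [ae_injective_prod_prod_pow (Fin K) (Fin K)] with H hH
  have hinj : Function.Injective fun S : Fin K → Fin K → Fin L =>
      ∏ m, ∏ k, H m k ^ (S m k : ℕ) := hH.comp hval
  refine ⟨hinj, ?_⟩
  rw [Set.ncard_range_of_injective hinj, Nat.card_eq_fintype_card]
  simp [← pow_mul, sq]

theorem stmt_6 (K L : ℕ) (hK : 2 ≤ K) (hL : 1 ≤ L) :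
    ∀ᵐ H ∂(volume : Measure (Fin K → Fin K → ℝ)),
      Function.Injective
        (fun S : Fin K → Fin K → Fin L => ∏ m : Fin K, ∏ k : Fin K, H m k ^ (S m k : ℕ)) ∧
      (Set.range
        (fun S : Fin K → Fin K → Fin L =>
          ∏ m : Fin K, ∏ k : Fin K, H m k ^ (S m k : ℕ))).ncard = L ^ (K ^ 2) :=
  stmt_6_general K L
end

section
/- Let B ⊆ ℝ^{K−1} have Lebesgue measure zero, and let D ⊆ ℝ^K be the set of nonzero vectors h such that (h_1/||h||, ..., h_{K−1}/||h||) ∈ B. Then D has Lebesgue measure zero in ℝ^K. -/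
/-!
Fix the unit vector `w = e_K` and write `P h = h - ⟪w, h⟫ w`. Off the null hyperplane `⟪w, h⟫ = 0`,
the unit vector `h / ‖h‖` lies on one of the two open hemispheres, which are graphs
`u ↦ u ± √(1 - ‖u‖²) w` over the open unit ball of `w^⊥`. So `h` is the image of a point `g` with
`P g = P h / ‖h‖` under one of two maps that are differentiable on `‖P g‖ < 1`. These points `g`
form a subset of the null cylinder over `B`, and differentiable maps send null sets to null sets.
-/

open MeasureTheory Measure
open scoped RealInnerProductSpace

section ConeOverCylinder

variable {E : Type*} [NormedAddCommGroup E] [InnerProductSpace ℝ E] {w : E}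

noncomputable def perpComponent (w g : E) : E := g - ⟪w, g⟫ • w

theorem inner_perpComponent (hw : ‖w‖ = 1) (g : E) : ⟪w, perpComponent w g⟫ = 0 := by
  simp [perpComponent, inner_sub_right, inner_smul_right, hw]

theorem perpComponent_add_smul (hw : ‖w‖ = 1) (g : E) (c : ℝ) :
    perpComponent w (g + c • w) = perpComponent w g := by
  simp only [perpComponent, inner_add_right, inner_smul_right, real_inner_self_eq_norm_sq, hw]
  module

theorem perpComponent_smul (a : ℝ) (g : E) : perpComponent w (a • g) = a • perpComponent w g := by
  simp only [perpComponent, inner_smul_right]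
  module

theorem norm_sq_eq_norm_perpComponent_sq_add (hw : ‖w‖ = 1) (g : E) :
    ‖g‖ ^ 2 = ‖perpComponent w g‖ ^ 2 + ⟪w, g⟫ ^ 2 := by
  have hg : g = perpComponent w g + ⟪w, g⟫ • w := by simp [perpComponent]
  conv_lhs => rw [hg]
  rw [norm_add_sq_real, inner_smul_right, real_inner_comm w (perpComponent w g),
    inner_perpComponent hw, norm_smul, hw, mul_one, Real.norm_eq_abs, sq_abs]
  ring

/-- For `ε = ±1` and `u = perpComponent w g` in the open unit ball, `u + ε √(1 - ‖u‖²) • w` is the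
point of the unit sphere above or below `u`; scaling it by `⟪w, g⟫` sweeps out the cone over the
corresponding open hemisphere. -/
noncomputable def hemisphereCone (w : E) (ε : ℝ) (g : E) : E :=
  ⟪w, g⟫ • (perpComponent w g + (ε * √(1 - ‖perpComponent w g‖ ^ 2)) • w)

theorem differentiableOn_hemisphereCone (w : E) (ε : ℝ) :
    DifferentiableOn ℝ (hemisphereCone w ε) {g | ‖perpComponent w g‖ < 1} := by
  intro g hg
  have hg : ‖perpComponent w g‖ < 1 := hg
  have hsqrt : 1 - ‖perpComponent w g‖ ^ 2 ≠ 0 := by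
    nlinarith [norm_nonneg (perpComponent w g)]
  have hinner : Differentiable ℝ (fun g : E => ⟪w, g⟫) := (innerSL ℝ w).differentiable
  have hperp : Differentiable ℝ (perpComponent w) := by unfold perpComponent; fun_prop
  have hroot : DifferentiableAt ℝ (fun g => √(1 - ‖perpComponent w g‖ ^ 2)) g :=
    ((differentiableAt_const 1).sub ((hperp g).norm_sq ℝ)).sqrt hsqrt
  exact ((hinner g).smul ((hperp g).add
    (((differentiableAt_const ε).mul hroot).smul_const w))).differentiableWithinAt

theorem exists_hemisphereCone_eq (hw : ‖w‖ = 1) {h : E} (hh : ⟪w, h⟫ ≠ 0) {ε : ℝ}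
    (hε : ε * |⟪w, h⟫| = ⟪w, h⟫) :
    ∃ c : ℝ, ‖perpComponent w (‖h‖⁻¹ • h + c • w)‖ < 1 ∧
      hemisphereCone w ε (‖h‖⁻¹ • h + c • w) = h := by
  set t := ⟪w, h⟫
  set r := ‖h‖
  have hr : 0 < r := norm_pos_iff.2 fun h0 => hh (by simp [t, h0])
  refine ⟨r - r⁻¹ * t, ?_⟩
  set g := r⁻¹ • h + (r - r⁻¹ * t) • w
  have hperp : perpComponent w g = r⁻¹ • perpComponent w h := by
    rw [perpComponent_add_smul hw, perpComponent_smul]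
  have hinner : ⟪w, g⟫ = r := by
    simp only [g, inner_add_right, inner_smul_right, real_inner_self_eq_norm_sq, hw]
    field_simp
    ring
  have hpyth : ‖perpComponent w g‖ ^ 2 = 1 - (t / r) ^ 2 := by
    have := norm_sq_eq_norm_perpComponent_sq_add hw h
    rw [hperp, norm_smul, Real.norm_eq_abs, abs_inv, abs_of_pos hr]
    field_simp
    linarith
  have hroot : √(1 - ‖perpComponent w g‖ ^ 2) = |t| / r := by
    rw [hpyth, sub_sub_cancel, Real.sqrt_sq_eq_abs, abs_div, abs_of_pos hr]
  refine ⟨?_, ?_⟩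
  · have : 0 < (t / r) ^ 2 := by positivity
    nlinarith [norm_nonneg (perpComponent w g)]
  · rw [hemisphereCone, hinner, hroot, hperp, smul_add, smul_smul, mul_inv_cancel₀ hr.ne',
      one_smul, smul_smul, ← mul_div_assoc, mul_div_cancel₀ _ hr.ne', hε]
    simp [perpComponent, t]

theorem addHaar_setOf_inv_norm_smul_mem_eq_zero [FiniteDimensional ℝ E] [MeasurableSpace E]
    [BorelSpace E] (μ : Measure E) [μ.IsAddHaarMeasure] (hw : ‖w‖ = 1) {S : Set E}
    (hS : μ S = 0) (hSw : ∀ x ∈ S, ∀ c : ℝ, x + c • w ∈ S) :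
    μ {h | ‖h‖⁻¹ • h ∈ S} = 0 := by
  set T := S ∩ {g | ‖perpComponent w g‖ < 1}
  have hT : μ T = 0 := measure_mono_null Set.inter_subset_left hS
  have cover : {h | ‖h‖⁻¹ • h ∈ S} ⊆
      ((ℝ ∙ w)ᗮ : Set E) ∪ (hemisphereCone w 1 '' T ∪ hemisphereCone w (-1) '' T) := by
    intro h hh
    by_cases ht : ⟪w, h⟫ = 0
    · exact Or.inl (Submodule.mem_orthogonal_singleton_iff_inner_right.2 ht)
    have hcone : ∀ ε, ε * |⟪w, h⟫| = ⟪w, h⟫ → h ∈ hemisphereCone w ε '' T := fun ε hε => by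
      obtain ⟨c, hc, hΦ⟩ := exists_hemisphereCone_eq hw ht hε
      exact ⟨_, ⟨hSw _ hh c, hc⟩, hΦ⟩
    rcases lt_or_gt_of_ne ht with hneg | hpos
    · exact Or.inr (Or.inr (hcone _ (by rw [abs_of_neg hneg]; ring)))
    · exact Or.inr (Or.inl (hcone _ (by rw [abs_of_pos hpos]; ring)))
  have hw_mem : w ∉ (ℝ ∙ w)ᗮ := by
    rw [Submodule.mem_orthogonal_singleton_iff_inner_right, real_inner_self_eq_norm_sq, hw]
    norm_num
  have himage : ∀ ε, μ (hemisphereCone w ε '' T) = 0 := fun ε =>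
    addHaar_image_eq_zero_of_differentiableOn_of_addHaar_eq_zero μ
      ((differentiableOn_hemisphereCone w ε).mono Set.inter_subset_right) hT
  exact measure_mono_null cover (measure_union_null
    (addHaar_submodule μ _ fun htop => hw_mem (htop ▸ Submodule.mem_top))
    (measure_union_null (himage 1) (himage (-1))))

end ConeOverCylinder

theorem EuclideanSpace.volume_setOf_castSucc_mem_eq_zero {n : ℕ} {B : Set (Fin n → ℝ)}
    (hB : volume B = 0) :
    volume {x : EuclideanSpace ℝ (Fin (n + 1)) | (fun j => x (Fin.castSucc j)) ∈ B} = 0 := by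
  let e := (MeasurableEquiv.toLp 2 (Fin (n + 1) → ℝ)).symm.trans
    (MeasurableEquiv.piFinSuccAbove (fun _ => ℝ) (Fin.last n))
  have he : MeasurePreserving e volume volume :=
    (volume_preserving_piFinSuccAbove (fun _ => ℝ) (Fin.last n)).comp
      (EuclideanSpace.volume_preserving_symm_measurableEquiv_toLp _)
  have hset : {x : EuclideanSpace ℝ (Fin (n + 1)) | (fun j => x (Fin.castSucc j)) ∈ B} =
      e ⁻¹' (Set.univ ×ˢ B) := by
    ext x
    simp only [Set.mem_ofPred_eq, Set.mem_preimage, MeasurableEquiv.trans_apply,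
      MeasurableEquiv.toLp_symm_apply, MeasurableEquiv.piFinSuccAbove_apply, Fin.insertNthEquiv_last,
      Fin.snocEquiv_symm_apply, Set.mem_prod, Set.mem_univ, true_and, e]
    exact Iff.rfl
  rw [hset, he.measure_preimage_equiv, volume_eq_prod, prod_prod, hB, mul_zero]

theorem stmt_9_general (K : ℕ) (B : Set (Fin (K - 1) → ℝ))
    (hB : volume B = 0) :
    volume {h : EuclideanSpace ℝ (Fin K) |
      h ≠ 0 ∧ (fun i : Fin (K - 1) => h (Fin.castLE (Nat.sub_le K 1) i) / ‖h‖) ∈ B} = 0 := by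
  rcases K with _ | n
  · simp [Subsingleton.elim _ (0 : EuclideanSpace ℝ (Fin 0))]
  change Set (Fin n → ℝ) at B
  refine measure_mono_null ?_ (addHaar_setOf_inv_norm_smul_mem_eq_zero volume
    (w := EuclideanSpace.single (Fin.last n) 1) (by simp)
    (EuclideanSpace.volume_setOf_castSucc_mem_eq_zero hB) ?_)
  · rintro h ⟨-, hh⟩
    simp only [div_eq_inv_mul] at hh
    exact hh
  · intro x hx c
    simpa [PiLp.single_apply, Fin.castSucc_ne_last] using hx

theorem stmt_9 (K : ℕ) (hK : 2 ≤ K) (B : Set (Fin (K - 1) → ℝ))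
    (hB : volume B = 0) :
    volume {h : EuclideanSpace ℝ (Fin K) |
      h ≠ 0 ∧ (fun i : Fin (K - 1) => h (Fin.castLE (Nat.sub_le K 1) i) / ‖h‖) ∈ B} = 0 :=
  stmt_9_general K B hB
end

section
/- Let K ≥ 2 and fix δ > 0. Suppose h ∈ ℝ^K satisfies: there exists c > 0 such that for all q ∈ ℕ and all a ∈ ℤ^{K−1}, max_{1≤k≤K−1} |h_k/||h|| − a_k/√q| ≥ c q^{−1/2 − 1/(K−1) − δ}. Then for every nonzero a ∈ ℤ^K with ||a||^2 = q, the rate loss term ||a||^2 + P(||h||^2||a||^2 − (h·a)^2) is at least max{q, (4c^2/π^2) P ||h||^2 q^{−2/(K−1) − 2δ}}, and hence at least ((4c^2/π^2) ||h||^2)^{1/(1+2/(K−1)+2δ)} · P^{1/(1+2/(K−1)+2δ)} for all choices of a. -/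
/-!
Write `x = h`, `y = a` and `D = ⟪x, y⟫ ≥ 0`. The Gram quantity `‖x‖²‖y‖² - D²` dominates
`‖x‖‖y‖ (‖x‖‖y‖ - D) = ‖‖y‖ x - ‖x‖ y‖² / 2`, i.e. half of `‖x‖²‖y‖²` times the squared chordal
distance between the directions `x / ‖x‖` and `y / ‖y‖`. One coordinate of that distance is at
least `c q^(-1/2 - 1/(K-1) - δ)` by the Diophantine hypothesis, and `1/2 ≥ 4/π²`; this gives the
first bound. For the second, put `M = (4c²/π²) P ‖h‖²` and `B = 1 + 2/(K-1) + 2δ ≥ 1`: either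
`M^(1/B) ≤ q`, or `q < M^(1/B)` and then `M q^(1-B) ≥ M^(1/B)`.
-/

open Real
open scoped RealInnerProductSpace

theorem four_div_pi_sq_le_one_half : 4 / π ^ 2 ≤ 1 / 2 := by
  rw [div_le_div_iff₀ (by positivity) two_pos]
  nlinarith [pi_gt_three]

section InnerProductSpace

variable {E : Type*} [SeminormedAddCommGroup E] [InnerProductSpace ℝ E]

theorem norm_smul_sub_smul_sq (x y : E) :
    ‖‖y‖ • x - ‖x‖ • y‖ ^ 2 = 2 * (‖x‖ * ‖y‖) * (‖x‖ * ‖y‖ - ⟪x, y⟫) := by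
  rw [norm_sub_sq_real, norm_smul, norm_smul, real_inner_smul_left, real_inner_smul_right,
    norm_norm, norm_norm]
  ring

theorem norm_smul_sub_smul_sq_le_of_inner_nonneg {x y : E} (hxy : 0 ≤ ⟪x, y⟫) :
    ‖‖y‖ • x - ‖x‖ • y‖ ^ 2 ≤ 2 * (‖x‖ ^ 2 * ‖y‖ ^ 2 - ⟪x, y⟫ ^ 2) := by
  rw [norm_smul_sub_smul_sq]
  -- `N (N - D) ≤ (N + D) (N - D)` for `N = ‖x‖ ‖y‖ ≥ D = ⟪x, y⟫ ≥ 0`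
  nlinarith [real_inner_le_norm x y]

end InnerProductSpace

namespace EuclideanSpace

variable {ι : Type*} [Fintype ι]

theorem norm_mul_norm_mul_abs_div_sub_div_le (x y : EuclideanSpace ℝ ι) (i : ι) :
    ‖x‖ * ‖y‖ * |x i / ‖x‖ - y i / ‖y‖| ≤ ‖‖y‖ • x - ‖x‖ • y‖ := by
  have hcancel (z : EuclideanSpace ℝ ι) : ‖z‖ * (z i / ‖z‖) = z i := by
    rcases eq_or_ne z 0 with rfl | hz
    · simp
    · field_simp [norm_ne_zero_iff.2 hz]
  calc ‖x‖ * ‖y‖ * |x i / ‖x‖ - y i / ‖y‖|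
      = |‖y‖ * x i - ‖x‖ * y i| := by
        rw [← abs_of_nonneg (by positivity : 0 ≤ ‖x‖ * ‖y‖), ← abs_mul]
        congr 1
        linear_combination ‖y‖ * hcancel x - ‖x‖ * hcancel y
    _ = ‖(‖y‖ • x - ‖x‖ • y) i‖ := by simp [Real.norm_eq_abs]
    _ ≤ ‖‖y‖ • x - ‖x‖ • y‖ := PiLp.norm_apply_le _ i

theorem sq_div_two_mul_le_sq_norm_mul_sq_norm_sub_sq_inner {x y : EuclideanSpace ℝ ι}
    (hxy : 0 ≤ ⟪x, y⟫) {ε : ℝ} (hε : 0 ≤ ε) {i : ι} (hi : ε ≤ |x i / ‖x‖ - y i / ‖y‖|) :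
    ε ^ 2 / 2 * (‖x‖ ^ 2 * ‖y‖ ^ 2) ≤ ‖x‖ ^ 2 * ‖y‖ ^ 2 - ⟪x, y⟫ ^ 2 := by
  have hsep : ε * (‖x‖ * ‖y‖) ≤ ‖‖y‖ • x - ‖x‖ • y‖ :=
    calc ε * (‖x‖ * ‖y‖) ≤ |x i / ‖x‖ - y i / ‖y‖| * (‖x‖ * ‖y‖) := by gcongr
      _ ≤ ‖‖y‖ • x - ‖x‖ • y‖ := by
        rw [mul_comm]; exact norm_mul_norm_mul_abs_div_sub_div_le x y i
  have := pow_le_pow_left₀ (by positivity) hsep 2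
  nlinarith [norm_smul_sub_smul_sq_le_of_inner_nonneg hxy]

theorem max_sq_norm_le_of_le_abs_div_sub_div {x y : EuclideanSpace ℝ ι} (hxy : 0 ≤ ⟪x, y⟫)
    {ε : ℝ} (hε : 0 ≤ ε) {i : ι} (hi : ε ≤ |x i / ‖x‖ - y i / ‖y‖|) {P : ℝ} (hP : 0 ≤ P) :
    max (‖y‖ ^ 2) (4 / π ^ 2 * ε ^ 2 * P * ‖x‖ ^ 2 * ‖y‖ ^ 2) ≤
      ‖y‖ ^ 2 + P * (‖x‖ ^ 2 * ‖y‖ ^ 2 - ⟪x, y⟫ ^ 2) := by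
  have hgap := sq_div_two_mul_le_sq_norm_mul_sq_norm_sub_sq_inner hxy hε hi
  have hG : 0 ≤ ‖x‖ ^ 2 * ‖y‖ ^ 2 - ⟪x, y⟫ ^ 2 := le_trans (by positivity) hgap
  refine max_le (le_add_of_nonneg_right (mul_nonneg hP hG)) ?_
  calc 4 / π ^ 2 * ε ^ 2 * P * ‖x‖ ^ 2 * ‖y‖ ^ 2
      ≤ 1 / 2 * ε ^ 2 * P * ‖x‖ ^ 2 * ‖y‖ ^ 2 := by
        gcongr ?_ * _ * _ * _ * _; exact four_div_pi_sq_le_one_half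
    _ = P * (ε ^ 2 / 2 * (‖x‖ ^ 2 * ‖y‖ ^ 2)) := by ring
    _ ≤ P * (‖x‖ ^ 2 * ‖y‖ ^ 2 - ⟪x, y⟫ ^ 2) := by gcongr
    _ ≤ ‖y‖ ^ 2 + P * (‖x‖ ^ 2 * ‖y‖ ^ 2 - ⟪x, y⟫ ^ 2) := le_add_of_nonneg_left (sq_nonneg _)

end EuclideanSpace

theorem rpow_one_div_le_max_mul_rpow_one_sub {q M B : ℝ} (hq : 0 < q) (hM : 0 ≤ M) (hB : 1 ≤ B) :
    M ^ (1 / B) ≤ max q (M * q ^ (1 - B)) := by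
  set m := M ^ (1 / B)
  have hmB : M = m ^ B := by
    rw [← rpow_mul hM, one_div_mul_cancel (by positivity), rpow_one]
  rcases le_or_gt m q with hmq | hqm
  · exact le_max_of_le_left hmq
  refine le_max_of_le_right ?_
  have hm : 0 < m := hq.trans hqm
  calc m = m * q ^ (B - 1) * q ^ (1 - B) := by
        rw [mul_assoc, ← rpow_add hq, show B - 1 + (1 - B) = 0 by ring, rpow_zero, mul_one]
    _ ≤ m * m ^ (B - 1) * q ^ (1 - B) := by gcongr
    _ = M * q ^ (1 - B) := by rw [mul_comm m, ← rpow_add_one hm.ne', sub_add_cancel, hmB]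

theorem stmt_15_general (K : ℕ) (δ : ℝ) (hδ : 0 < δ)
    (h : Fin K → ℝ) (c : ℝ) (hc : 0 < c)
    (hdio : ∀ q : ℕ, 0 < q → ∀ b : Fin (K - 1) → ℤ, ∃ k : Fin (K - 1),
      c * (q : ℝ) ^ (-(1 : ℝ) / 2 - 1 / ((K : ℝ) - 1) - δ) ≤
        |h (Fin.castLE (Nat.sub_le K 1) k) / Real.sqrt (∑ j, h j ^ 2) -
          (b k : ℝ) / Real.sqrt q|)
    (P : ℝ) (hP : 0 < P)
    (a : Fin K → ℤ) (ha : a ≠ 0) (hangle : 0 ≤ ∑ k, h k * (a k : ℝ))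
    (q : ℕ) (hq : (q : ℝ) = ∑ k, (a k : ℝ) ^ 2) :
    (max (q : ℝ)
        ((4 * c ^ 2 / π ^ 2) * P * (∑ j, h j ^ 2) *
          (q : ℝ) ^ (-(2 : ℝ) / ((K : ℝ) - 1) - 2 * δ)) ≤
      (∑ k, (a k : ℝ) ^ 2) +
        P * ((∑ j, h j ^ 2) * (∑ k, (a k : ℝ) ^ 2) - (∑ k, h k * (a k : ℝ)) ^ 2)) ∧
    ((4 * c ^ 2 / π ^ 2) * (∑ j, h j ^ 2)) ^
          ((1 : ℝ) / (1 + 2 / ((K : ℝ) - 1) + 2 * δ)) *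
        P ^ ((1 : ℝ) / (1 + 2 / ((K : ℝ) - 1) + 2 * δ)) ≤
      (∑ k, (a k : ℝ) ^ 2) +
        P * ((∑ j, h j ^ 2) * (∑ k, (a k : ℝ) ^ 2) - (∑ k, h k * (a k : ℝ)) ^ 2) := by
  set x : EuclideanSpace ℝ (Fin K) := WithLp.toLp 2 h
  set y : EuclideanSpace ℝ (Fin K) := WithLp.toLp 2 fun k => (a k : ℝ)
  have hx : ∑ j, h j ^ 2 = ‖x‖ ^ 2 := (EuclideanSpace.real_norm_sq_eq x).symm
  have hy : ∑ k, (a k : ℝ) ^ 2 = ‖y‖ ^ 2 := (EuclideanSpace.real_norm_sq_eq y).symm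
  have hxy : ∑ k, h k * (a k : ℝ) = ⟪x, y⟫ := by simp [x, y, PiLp.inner_apply, mul_comm]
  simp only [hx, hy, hxy] at hangle hq hdio ⊢
  have hy0 : y ≠ 0 := fun hy0 => ha <| funext fun k => by
    simpa [y] using congrArg (fun z : EuclideanSpace ℝ (Fin K) => z k) hy0
  have hq0 : 0 < q := by exact_mod_cast hq ▸ pow_pos (norm_pos_iff.2 hy0) 2
  obtain ⟨k, hk⟩ := hdio q hq0 (fun k => a (Fin.castLE (Nat.sub_le K 1) k))
  have hsqrt : √(q : ℝ) = ‖y‖ := by rw [hq, sqrt_sq (norm_nonneg y)]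
  rw [sqrt_sq (norm_nonneg x), hsqrt] at hk
  have hexp : (q : ℝ) ^ (-(2 : ℝ) / ((K : ℝ) - 1) - 2 * δ) =
      ((q : ℝ) ^ (-(1 : ℝ) / 2 - 1 / ((K : ℝ) - 1) - δ)) ^ 2 * q := by
    rw [← rpow_natCast, ← rpow_mul (Nat.cast_nonneg q), ← rpow_add_one (by positivity)]
    congr 1
    push_cast
    ring
  have hmax : max (q : ℝ) (4 * c ^ 2 / π ^ 2 * P * ‖x‖ ^ 2 *
      (q : ℝ) ^ (-(2 : ℝ) / ((K : ℝ) - 1) - 2 * δ)) ≤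
      ‖y‖ ^ 2 + P * (‖x‖ ^ 2 * ‖y‖ ^ 2 - ⟪x, y⟫ ^ 2) := by
    convert EuclideanSpace.max_sq_norm_le_of_le_abs_div_sub_div hangle (by positivity) hk hP.le
      using 2
    rw [hexp, ← hq]
    ring
  refine ⟨hmax, le_trans ?_ hmax⟩
  have hK : (0 : ℝ) ≤ K - 1 := by
    rw [sub_nonneg]
    exact_mod_cast (Nat.sub_pos_iff_lt.1 k.pos).le
  have hB : 1 ≤ 1 + 2 / ((K : ℝ) - 1) + 2 * δ := by
    have : 0 ≤ 2 / ((K : ℝ) - 1) := by positivity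
    linarith
  rw [← mul_rpow (by positivity) hP.le, mul_right_comm,
    show -(2 : ℝ) / ((K : ℝ) - 1) - 2 * δ = 1 - (1 + 2 / ((K : ℝ) - 1) + 2 * δ) by ring]
  exact rpow_one_div_le_max_mul_rpow_one_sub (by positivity) (by positivity) hB

theorem stmt_15 (K : ℕ) (hK : 2 ≤ K) (δ : ℝ) (hδ : 0 < δ)
    (h : Fin K → ℝ) (hh : h ≠ 0) (c : ℝ) (hc : 0 < c)
    (hdio : ∀ q : ℕ, 0 < q → ∀ b : Fin (K - 1) → ℤ, ∃ k : Fin (K - 1),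
      c * (q : ℝ) ^ (-(1 : ℝ) / 2 - 1 / ((K : ℝ) - 1) - δ) ≤
        |h (Fin.castLE (Nat.sub_le K 1) k) / Real.sqrt (∑ j, h j ^ 2) -
          (b k : ℝ) / Real.sqrt q|)
    (P : ℝ) (hP : 0 < P)
    (a : Fin K → ℤ) (ha : a ≠ 0) (hangle : 0 ≤ ∑ k, h k * (a k : ℝ))
    (q : ℕ) (hq : (q : ℝ) = ∑ k, (a k : ℝ) ^ 2) :
    (max (q : ℝ)
        ((4 * c ^ 2 / π ^ 2) * P * (∑ j, h j ^ 2) *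
          (q : ℝ) ^ (-(2 : ℝ) / ((K : ℝ) - 1) - 2 * δ)) ≤
      (∑ k, (a k : ℝ) ^ 2) +
        P * ((∑ j, h j ^ 2) * (∑ k, (a k : ℝ) ^ 2) - (∑ k, h k * (a k : ℝ)) ^ 2)) ∧
    ((4 * c ^ 2 / π ^ 2) * (∑ j, h j ^ 2)) ^
          ((1 : ℝ) / (1 + 2 / ((K : ℝ) - 1) + 2 * δ)) *
        P ^ ((1 : ℝ) / (1 + 2 / ((K : ℝ) - 1) + 2 * δ)) ≤
      (∑ k, (a k : ℝ) ^ 2) +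
        P * ((∑ j, h j ^ 2) * (∑ k, (a k : ℝ) ^ 2) - (∑ k, h k * (a k : ℝ)) ^ 2) :=
  stmt_15_general K δ hδ h c hc hdio P hP a ha hangle q hq
end
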